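/- arXiv:2102.04061 — 2 statements merged into one kernel-verified Lean document; each statement's English description precedes it below -/
import Mathlib

section
/- Let b : ℝ^d → ℝ^d and σ : ℝ^d → ℝ^{d×d} be globally Lipschitz with constant L and satisfy |b(0)| + |σ(0)| ≤ L, and suppose σ(x) is invertible for every x ∈ ℝ^d. Define I(x) = inf{ A(φ) : φ ∈ H¹_{x₀}(0,T;ℝ^d), φ(T) = x } where A(φ) = (1/2)∫₀^T |σ(φ(t))^{-1}(φ'(t) − b(φ(t)))|² dt. Then for every a ∈ [0,∞) the sublevel set { x ∈ ℝ^d : I(x) ≤ a } is a compact subset of ℝ^d. -/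
open MeasureTheory Set

/-- The set of values `A(φ) = ½∫₀ᵀ |σ(φ(t))⁻¹ (φ'(t) − b(φ(t)))|² dt` over all
`φ ∈ H¹_{x₀}(0,T;ℝ^d)` with `φ(T) = x`; the rate function is `I(x) = inf` of this set. -/
def rateValues (d : ℕ) (T : ℝ) (x₀ : EuclideanSpace ℝ (Fin d))
    (b : EuclideanSpace ℝ (Fin d) → EuclideanSpace ℝ (Fin d))
    (σ : EuclideanSpace ℝ (Fin d) →
      (EuclideanSpace ℝ (Fin d) →L[ℝ] EuclideanSpace ℝ (Fin d)))
    (x : EuclideanSpace ℝ (Fin d)) : Set ℝ :=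
  {r : ℝ | ∃ φ φ' : ℝ → EuclideanSpace ℝ (Fin d),
    IntegrableOn φ' (Icc 0 T) ∧
    IntegrableOn (fun t => ‖φ' t‖ ^ 2) (Icc 0 T) ∧
    (∀ t ∈ Icc (0 : ℝ) T, φ t = x₀ + ∫ s in (0 : ℝ)..t, φ' s) ∧
    φ T = x ∧
    r = (1 / 2) * ∫ t in (0 : ℝ)..T,
      ‖(Ring.inverse (σ (φ t))) (φ' t - b (φ t))‖ ^ 2}

/-!
Along a path of finite action, `ψ = σ(φ)⁻¹ (φ' - b(φ))` is a control with `‖ψ‖²_{L²} = 2 A(φ)`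
and `φ' = b(φ) + σ(φ) ψ`. Since Lipschitz maps grow at most linearly,
`‖φ'‖ ≤ K (1 + ‖ψ‖) (1 + ‖φ‖)`, and an integral Gronwall inequality bounds all paths of action
at most `a + 1` uniformly; in particular their endpoints, so the sublevel set is bounded.

For closedness, a path of action `r` ending at `y` is steered to `x` by adding
`t ↦ t (x - y) / T`. On the compact set visited by such paths `σ⁻¹` is bounded, and the control
changes by `O(‖x - y‖) (1 + ‖ψ‖)`, whence `I(x) ≤ (1 + C ‖x - y‖) r + C ‖x - y‖`. Letting `y`
tend to `x` inside the sublevel set gives `I(x) ≤ a`.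
-/

theorem MeasureTheory.IntegrableOn.intervalIntegrable_of_mem_Icc {F : Type*}
    [NormedAddCommGroup F] {f : ℝ → F} {a b c d : ℝ} (hf : IntegrableOn f (Icc c d))
    (ha : a ∈ Icc c d) (hb : b ∈ Icc c d) : IntervalIntegrable f volume a b :=
  (hf.mono_set (uIcc_subset_Icc ha hb)).intervalIntegrable

theorem MeasureTheory.MemLp.intervalIntegrable_norm_sq {F : Type*} [NormedAddCommGroup F]
    {f : ℝ → F} {T : ℝ} (hT : 0 ≤ T) (hf : MemLp f 2 (volume.restrict (Icc 0 T))) :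
    IntervalIntegrable (fun t => ‖f t‖ ^ 2) volume 0 T :=
  IntegrableOn.intervalIntegrable_of_mem_Icc ((memLp_two_iff_integrable_sq_norm hf.1).1 hf)
    ⟨le_rfl, hT⟩ ⟨hT, le_rfl⟩

theorem integral_one_add_norm_le {F : Type*} [NormedAddCommGroup F] {f : ℝ → F} {T : ℝ}
    (hT : 0 ≤ T) (hf : MemLp f 2 (volume.restrict (Icc 0 T))) :
    ∫ t in 0..T, (1 + ‖f t‖) ≤ 1 / 2 * (∫ t in 0..T, ‖f t‖ ^ 2) + 3 / 2 * T := by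
  have hsq := hf.intervalIntegrable_norm_sq hT
  calc ∫ t in 0..T, (1 + ‖f t‖) ≤ ∫ t in 0..T, (1 / 2 * ‖f t‖ ^ 2 + 3 / 2) :=
        intervalIntegral.integral_mono_on hT
          (intervalIntegrable_const.add (IntegrableOn.intervalIntegrable_of_mem_Icc
            (hf.integrable one_le_two).norm ⟨le_rfl, hT⟩ ⟨hT, le_rfl⟩))
          ((hsq.const_mul _).add intervalIntegrable_const)
          fun t _ => by nlinarith [sq_nonneg (‖f t‖ - 1)]
    _ = 1 / 2 * (∫ t in 0..T, ‖f t‖ ^ 2) + 3 / 2 * T := by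
        rw [intervalIntegral.integral_add (hsq.const_mul _) intervalIntegrable_const,
          intervalIntegral.integral_const_mul, intervalIntegral.integral_const, smul_eq_mul]
        ring

section Gronwall

open intervalIntegral

variable {g u : ℝ → ℝ} {C T : ℝ}

theorem add_integral_mul_le_of_le_add_integral
    (hg : IntegrableOn g (Icc 0 T)) (hgu : IntegrableOn (fun s => g s * u s) (Icc 0 T))
    (hg0 : ∀ s ∈ Icc 0 T, 0 ≤ g s) (hu0 : ∀ s ∈ Icc 0 T, 0 ≤ u s)
    (hu : ∀ t ∈ Icc 0 T, u t ≤ C + ∫ s in 0..t, g s * u s)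
    {c t : ℝ} (hc : c ∈ Icc 0 T) (ht : t ∈ Icc 0 T) (hct : c ≤ t) :
    C + ∫ s in 0..t, g s * u s ≤
      (C + ∫ s in 0..c, g s * u s) + (∫ s in c..t, g s) * (C + ∫ s in 0..t, g s * u s) := by
  have h0 : (0 : ℝ) ∈ Icc 0 T := ⟨le_rfl, hc.1.trans hc.2⟩
  have hu_le : ∀ s ∈ Icc c t, g s * u s ≤ g s * (C + ∫ r in 0..t, g r * u r) := by
    intro s hs
    have hsT : s ∈ Icc 0 T := ⟨hc.1.trans hs.1, hs.2.trans ht.2⟩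
    refine mul_le_mul_of_nonneg_left ((hu s hsT).trans (add_le_add le_rfl ?_)) (hg0 s hsT)
    refine integral_mono_interval le_rfl hsT.1 hs.2 ?_ (hgu.intervalIntegrable_of_mem_Icc h0 ht)
    refine (ae_restrict_iff' measurableSet_Ioc).2 (ae_of_all _ fun r hr => ?_)
    have hrT : r ∈ Icc 0 T := ⟨hr.1.le, hr.2.trans ht.2⟩
    exact mul_nonneg (hg0 r hrT) (hu0 r hrT)
  have htail : ∫ s in c..t, g s * u s ≤ (∫ s in c..t, g s) * (C + ∫ s in 0..t, g s * u s) := by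
    rw [← intervalIntegral.integral_mul_const]
    exact integral_mono_on hct (hgu.intervalIntegrable_of_mem_Icc hc ht)
      ((hg.intervalIntegrable_of_mem_Icc hc ht).mul_const _) hu_le
  linarith [integral_add_adjacent_intervals (hgu.intervalIntegrable_of_mem_Icc h0 hc)
    (hgu.intervalIntegrable_of_mem_Icc hc ht)]

/-- An integral Gronwall inequality: crossing a stretch where `∫ g ≤ 1 / 2` at most doubles
the bound. -/
theorem le_two_pow_mul_of_le_add_integral
    (hg : IntegrableOn g (Icc 0 T)) (hgu : IntegrableOn (fun s => g s * u s) (Icc 0 T))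
    (hg0 : ∀ s ∈ Icc 0 T, 0 ≤ g s) (hu0 : ∀ s ∈ Icc 0 T, 0 ≤ u s)
    (hu : ∀ t ∈ Icc 0 T, u t ≤ C + ∫ s in 0..t, g s * u s) (n : ℕ) :
    ∀ t ∈ Icc 0 T, ∫ s in 0..t, g s ≤ n / 2 → u t ≤ 2 ^ n * C := by
  have hstep {c t : ℝ} := add_integral_mul_le_of_le_add_integral hg hgu hg0 hu0 hu (c := c) (t := t)
  have hW0 : ∀ t ∈ Icc 0 T, 0 ≤ C + ∫ s in 0..t, g s * u s :=
    fun t ht => (hu0 t ht).trans (hu t ht)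
  suffices ∀ t ∈ Icc 0 T, ∫ s in 0..t, g s ≤ n / 2 → C + ∫ s in 0..t, g s * u s ≤ 2 ^ n * C from
    fun t ht hgt => (hu t ht).trans (this t ht hgt)
  induction n with
  | zero =>
    intro t ht hgt
    have h0 : (0 : ℝ) ∈ Icc 0 T := ⟨le_rfl, ht.1.trans ht.2⟩
    have := hstep h0 ht ht.1
    simp only [integral_same, add_zero] at this
    nlinarith [hW0 t ht]
  | succ n ih =>
    intro t ht hgt
    obtain ⟨c, hc, hct, hGc, hGct⟩ : ∃ c ∈ Icc 0 T, c ≤ t ∧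
        ∫ s in 0..c, g s ≤ n / 2 ∧ ∫ s in c..t, g s ≤ 1 / 2 := by
      by_cases hGt : ∫ s in 0..t, g s ≤ n / 2
      · exact ⟨t, ht, le_rfl, hGt, by simp⟩
      have h0 : (0 : ℝ) ∈ Icc 0 T := ⟨le_rfl, ht.1.trans ht.2⟩
      have hG : ContinuousOn (fun r => ∫ s in 0..r, g s) (Icc 0 t) := by
        simpa [uIcc_of_le ht.1] using
          continuousOn_primitive_interval (hg.mono_set (uIcc_subset_Icc h0 ht))
      obtain ⟨c, hc, hGc⟩ := intermediate_value_Icc ht.1 hG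
        ⟨by simp; positivity, (not_le.1 hGt).le⟩
      have hcT : c ∈ Icc 0 T := ⟨hc.1, hc.2.trans ht.2⟩
      refine ⟨c, hcT, hc.2, hGc.le, ?_⟩
      rw [← integral_interval_sub_left (hg.intervalIntegrable_of_mem_Icc h0 ht)
        (hg.intervalIntegrable_of_mem_Icc h0 hcT)]
      push_cast at hgt
      linarith [show ∫ s in 0..c, g s = n / 2 from hGc]
    have := hstep hc ht hct
    have := ih c hc hGc
    rw [pow_succ]
    nlinarith [hW0 t ht]

end Gronwall

theorem Continuous.ring_inverse_of_isUnit {X R : Type*} [TopologicalSpace X] [NormedRing R]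
    [HasSummableGeomSeries R] {f : X → R} (hf : Continuous f) (hunit : ∀ x, IsUnit (f x)) :
    Continuous fun x => Ring.inverse (f x) :=
  continuous_iff_continuousAt.2 fun x => by
    obtain ⟨u, hu⟩ := hunit x
    exact (hu ▸ NormedRing.inverse_continuousAt u).comp hf.continuousAt

theorem LipschitzWith.norm_le_mul_one_add_norm {E F : Type*} [SeminormedAddCommGroup E]
    [SeminormedAddCommGroup F] {L : NNReal} {f : E → F} (hf : LipschitzWith L f) (z : E) :
    ‖f z‖ ≤ (L + ‖f 0‖) * (1 + ‖z‖) := by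
  have := hf.norm_sub_le z 0
  rw [sub_zero] at this
  nlinarith [norm_le_norm_add_norm_sub' (f z) (f 0), norm_nonneg z, norm_nonneg (f 0), L.2]

theorem sq_le_one_add_mul_sq_add_mul {p q κ K K' : ℝ} (hp : 0 ≤ p) (hq : 0 ≤ q) (hκ : 0 ≤ κ)
    (hκ1 : κ ≤ 1) (hK : 0 ≤ K) (hK' : 0 ≤ K') (h : q ≤ p + κ * (K * p + K')) :
    q ^ 2 ≤ (1 + κ * (1 + 4 * K ^ 2)) * p ^ 2 + κ * (4 * K' ^ 2) := by
  have hw : 0 ≤ K * p + K' := by positivity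
  calc q ^ 2 ≤ (p + κ * (K * p + K')) ^ 2 := pow_le_pow_left₀ hq h 2
    _ ≤ (1 + κ) * p ^ 2 + 2 * κ * (K * p + K') ^ 2 := by
        nlinarith [sq_nonneg (p - (K * p + K')), mul_le_mul_of_nonneg_right hκ1 (mul_nonneg hκ
          (sq_nonneg (K * p + K')))]
    _ ≤ (1 + κ * (1 + 4 * K ^ 2)) * p ^ 2 + κ * (4 * K' ^ 2) := by
        nlinarith [mul_nonneg hκ (sq_nonneg (K * p - K'))]

section SkeletonControl

variable {E : Type*} [NormedAddCommGroup E] [NormedSpace ℝ E]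
  {L : NNReal} {b : E → E} {σ : E → E →L[ℝ] E}

/-- The control `ψ` with `v = b(z) + σ(z) ψ`, read off the velocity `v` at the point `z`. -/
noncomputable def skeletonControl (b : E → E) (σ : E → E →L[ℝ] E) (z v : E) : E :=
  Ring.inverse (σ z) (v - b z)

theorem apply_skeletonControl {z : E} (hz : IsUnit (σ z)) (v : E) :
    σ z (skeletonControl b σ z v) = v - b z := by
  rw [skeletonControl, ← mul_apply_eq_comp, Ring.mul_inverse_cancel _ hz, one_apply_eq_self]

theorem norm_le_mul_one_add_norm_skeletonControl {K : ℝ} {z : E} (hz : IsUnit (σ z))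
    (hbz : ‖b z‖ ≤ K * (1 + ‖z‖)) (hσz : ‖σ z‖ ≤ K * (1 + ‖z‖)) (v : E) :
    ‖v‖ ≤ K * (1 + ‖z‖) * (1 + ‖skeletonControl b σ z v‖) := by
  set ψ := skeletonControl b σ z v
  have hv : b z + σ z ψ = v := by
    rw [apply_skeletonControl hz]; abel
  calc ‖v‖ ≤ ‖b z‖ + ‖σ z‖ * ‖ψ‖ := by
        rw [← hv]; exact (norm_add_le _ _).trans (by gcongr; exact (σ z).le_opNorm _)
    _ ≤ K * (1 + ‖z‖) * (1 + ‖ψ‖) := by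
        nlinarith [norm_nonneg ψ]

theorem norm_skeletonControl_sub_le (hb : LipschitzWith L b) (hσ : LipschitzWith L σ)
    {z z' : E} (hz : IsUnit (σ z)) (hz' : IsUnit (σ z')) (v v' : E) :
    ‖skeletonControl b σ z' v' - skeletonControl b σ z v‖ ≤
      ‖Ring.inverse (σ z')‖ * (L * ‖z' - z‖ * (‖skeletonControl b σ z v‖ + 1) + ‖v' - v‖) := by
  set ψ := skeletonControl b σ z v
  have hψ : ψ = Ring.inverse (σ z') (σ z' ψ) := by
    rw [← mul_apply_eq_comp, Ring.inverse_mul_cancel _ hz', one_apply_eq_self]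
  have hdiff : v' - b z' - σ z' ψ = (v' - v) - (b z' - b z) - (σ z' - σ z) ψ := by
    rw [sub_apply, apply_skeletonControl hz]; abel
  have hσψ : ‖(σ z' - σ z) ψ‖ ≤ L * ‖z' - z‖ * ‖ψ‖ :=
    ((σ z' - σ z).le_opNorm ψ).trans (by gcongr; exact hσ.norm_sub_le z' z)
  calc ‖skeletonControl b σ z' v' - ψ‖
      = ‖Ring.inverse (σ z') ((v' - v) - (b z' - b z) - (σ z' - σ z) ψ)‖ := by
        rw [← hdiff, map_sub, ← hψ]; rfl
    _ ≤ ‖Ring.inverse (σ z')‖ * ‖(v' - v) - (b z' - b z) - (σ z' - σ z) ψ‖ :=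
        ContinuousLinearMap.le_opNorm _ _
    _ ≤ ‖Ring.inverse (σ z')‖ * (L * ‖z' - z‖ * (‖ψ‖ + 1) + ‖v' - v‖) := by
        gcongr
        linarith [norm_sub_le ((v' - v) - (b z' - b z)) ((σ z' - σ z) ψ),
          norm_sub_le (v' - v) (b z' - b z), hb.norm_sub_le z' z]

theorem sq_norm_skeletonControl_add_smul_le (hb : LipschitzWith L b) (hσ : LipschitzWith L σ)
    (hinv : ∀ z, IsUnit (σ z)) {M T t : ℝ} (ht : t ∈ Icc 0 T) {z v c : E} (hc : ‖c‖ ≤ 1)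
    (hM : ‖Ring.inverse (σ (z + t • c))‖ ≤ M) :
    ‖skeletonControl b σ (z + t • c) (v + c)‖ ^ 2 ≤
      (1 + ‖c‖ * (1 + 4 * (M * L * T) ^ 2)) * ‖skeletonControl b σ z v‖ ^ 2 +
        ‖c‖ * (4 * (M * (L * T + 1)) ^ 2) := by
  have hM0 : 0 ≤ M := (norm_nonneg _).trans hM
  have ht0 : 0 ≤ t := ht.1
  have hT : 0 ≤ T := ht.1.trans ht.2
  have hdiff := norm_skeletonControl_sub_le hb hσ (hinv z) (hinv (z + t • c)) v (v + c)
  rw [add_sub_cancel_left, add_sub_cancel_left, norm_smul, Real.norm_of_nonneg ht0] at hdiff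
  have htc : t * ‖c‖ ≤ T * ‖c‖ := by gcongr; exact ht.2
  have hclose : ‖skeletonControl b σ (z + t • c) (v + c) - skeletonControl b σ z v‖ ≤
      ‖c‖ * (M * L * T * ‖skeletonControl b σ z v‖ + M * (L * T + 1)) := by
    refine hdiff.trans ((mul_le_mul_of_nonneg_right hM (by positivity)).trans ?_)
    nlinarith [mul_le_mul_of_nonneg_left htc
      (by positivity : 0 ≤ M * L * (‖skeletonControl b σ z v‖ + 1))]
  refine sq_le_one_add_mul_sq_add_mul (norm_nonneg _) (norm_nonneg _) (norm_nonneg c) hc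
    (by positivity) (by positivity) ?_
  linarith [norm_le_norm_add_norm_sub' (skeletonControl b σ (z + t • c) (v + c))
    (skeletonControl b σ z v)]

end SkeletonControl

section Paths

variable {E : Type*} [NormedAddCommGroup E] [NormedSpace ℝ E]
  {L : NNReal} {b : E → E} {σ : E → E →L[ℝ] E} {T : ℝ} {x₀ : E} {φ φ' : ℝ → E}

/-- `φ ∈ H¹_{x₀}(0,T)`, with weak derivative `φ'`. -/
structure IsH1Path (T : ℝ) (x₀ : E) (φ φ' : ℝ → E) : Prop where
  integrableOn : IntegrableOn φ' (Icc 0 T)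
  integrableOn_norm_sq : IntegrableOn (fun t => ‖φ' t‖ ^ 2) (Icc 0 T)
  eq_add_integral : ∀ t ∈ Icc 0 T, φ t = x₀ + ∫ s in 0..t, φ' s

noncomputable def action (T : ℝ) (b : E → E) (σ : E → E →L[ℝ] E) (φ φ' : ℝ → E) : ℝ :=
  1 / 2 * ∫ t in 0..T, ‖skeletonControl b σ (φ t) (φ' t)‖ ^ 2

theorem action_nonneg (hT : 0 ≤ T) (b : E → E) (σ : E → E →L[ℝ] E) (φ φ' : ℝ → E) :
    0 ≤ action T b σ φ φ' :=
  mul_nonneg (by norm_num) (intervalIntegral.integral_nonneg hT fun _ _ => by positivity)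

namespace IsH1Path

theorem memLp (hφ : IsH1Path T x₀ φ φ') : MemLp φ' 2 (volume.restrict (Icc 0 T)) :=
  (memLp_two_iff_integrable_sq_norm hφ.integrableOn.aestronglyMeasurable).2
    hφ.integrableOn_norm_sq

theorem of_memLp (h : MemLp φ' 2 (volume.restrict (Icc 0 T)))
    (heq : ∀ t ∈ Icc 0 T, φ t = x₀ + ∫ s in 0..t, φ' s) : IsH1Path T x₀ φ φ' :=
  ⟨h.integrable one_le_two, (memLp_two_iff_integrable_sq_norm h.1).1 h, heq⟩

theorem continuousOn (hφ : IsH1Path T x₀ φ φ') : ContinuousOn φ (Icc 0 T) :=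
  (continuousOn_const.add (intervalIntegral.continuousOn_primitive hφ.integrableOn)).congr
    fun t ht => by
      rw [hφ.eq_add_integral t ht, intervalIntegral.integral_of_le ht.1]
      rfl

theorem norm_le_add_integral_of_norm_le (hφ : IsH1Path T x₀ φ φ') {g : ℝ → ℝ}
    (hg : IntegrableOn g (Icc 0 T)) (hφ' : ∀ s ∈ Icc 0 T, ‖φ' s‖ ≤ g s) {t : ℝ}
    (ht : t ∈ Icc 0 T) : ‖φ t‖ ≤ ‖x₀‖ + ∫ s in 0..t, g s := by
  have h0 : (0 : ℝ) ∈ Icc 0 T := ⟨le_rfl, ht.1.trans ht.2⟩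
  rw [hφ.eq_add_integral t ht]
  refine (norm_add_le _ _).trans (add_le_add le_rfl
    ((intervalIntegral.norm_integral_le_integral_norm ht.1).trans ?_))
  exact intervalIntegral.integral_mono_on ht.1
    (IntegrableOn.intervalIntegrable_of_mem_Icc hφ.integrableOn.norm h0 ht)
    (hg.intervalIntegrable_of_mem_Icc h0 ht) fun s hs => hφ' s ⟨hs.1, hs.2.trans ht.2⟩

theorem add_smul [CompleteSpace E] (hφ : IsH1Path T x₀ φ φ') (c : E) :
    IsH1Path T x₀ (fun t => φ t + t • c) (fun t => φ' t + c) :=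
  of_memLp (hφ.memLp.add (memLp_const c)) fun t ht => by
    rw [intervalIntegral.integral_add
      (hφ.integrableOn.intervalIntegrable_of_mem_Icc ⟨le_rfl, ht.1.trans ht.2⟩ ht)
      intervalIntegrable_const, intervalIntegral.integral_const, sub_zero,
      hφ.eq_add_integral t ht, add_assoc]

theorem memLp_skeletonControl [CompleteSpace E] (hφ : IsH1Path T x₀ φ φ') (hb : Continuous b)
    (hσ : Continuous σ) (hinv : ∀ z, IsUnit (σ z)) :
    MemLp (fun t => skeletonControl b σ (φ t) (φ' t)) 2 (volume.restrict (Icc 0 T)) := by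
  have hA : ContinuousOn (fun t => Ring.inverse (σ (φ t))) (Icc 0 T) :=
    (hσ.ring_inverse_of_isUnit hinv).comp_continuousOn hφ.continuousOn
  obtain ⟨M, hM⟩ := isCompact_Icc.exists_bound_of_continuousOn hA
  have hbφ : ContinuousOn (fun t => b (φ t)) (Icc 0 T) := hb.comp_continuousOn hφ.continuousOn
  obtain ⟨Mb, hMb⟩ := isCompact_Icc.exists_bound_of_continuousOn hbφ
  have hv : MemLp (fun t => φ' t - b (φ t)) 2 (volume.restrict (Icc 0 T)) :=
    hφ.memLp.sub (MemLp.of_bound (hbφ.aestronglyMeasurable measurableSet_Icc) Mb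
      ((ae_restrict_iff' measurableSet_Icc).2 (ae_of_all _ hMb)))
  refine hv.of_le_mul (c := M) ((ContinuousLinearMap.id ℝ (E →L[ℝ] E)).aestronglyMeasurable_comp₂
    (hA.aestronglyMeasurable measurableSet_Icc) hv.1)
    ((ae_restrict_iff' measurableSet_Icc).2 (ae_of_all _ fun t ht => ?_))
  exact ((Ring.inverse (σ (φ t))).le_opNorm _).trans (by gcongr; exact hM t ht)

end IsH1Path

theorem exists_norm_le_of_action_le [CompleteSpace E] (hb : LipschitzWith L b)
    (hσ : LipschitzWith L σ) (hinv : ∀ z, IsUnit (σ z)) (T : ℝ) (x₀ : E) (A : ℝ) :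
    ∃ R, ∀ φ φ' : ℝ → E, IsH1Path T x₀ φ φ' → action T b σ φ φ' ≤ A →
      ∀ t ∈ Icc 0 T, ‖φ t‖ ≤ R := by
  set K : ℝ := L + ‖b 0‖ + ‖σ 0‖
  have hbK (z : E) : ‖b z‖ ≤ K * (1 + ‖z‖) :=
    (hb.norm_le_mul_one_add_norm z).trans (by gcongr; linarith [norm_nonneg (σ 0)])
  have hσK (z : E) : ‖σ z‖ ≤ K * (1 + ‖z‖) :=
    (hσ.norm_le_mul_one_add_norm z).trans (by gcongr; linarith [norm_nonneg (b 0)])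
  set N := ⌈2 * K * (A + 3 / 2 * T)⌉₊
  refine ⟨2 ^ N * (1 + ‖x₀‖), fun φ φ' hφ hA t ht => ?_⟩
  have hT : 0 ≤ T := ht.1.trans ht.2
  have hψ := hφ.memLp_skeletonControl hb.continuous hσ.continuous hinv
  set g := fun s => K * (1 + ‖skeletonControl b σ (φ s) (φ' s)‖)
  have hg : IntegrableOn g (Icc 0 T) :=
    ((integrable_const 1).add (hψ.integrable one_le_two).norm).const_mul K
  have hgu : IntegrableOn (fun s => g s * (1 + ‖φ s‖)) (Icc 0 T) :=
    hg.mul_continuousOn (continuousOn_const.add hφ.continuousOn.norm) isCompact_Icc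
  have hu (s : ℝ) (hs : s ∈ Icc 0 T) :
      1 + ‖φ s‖ ≤ (1 + ‖x₀‖) + ∫ r in 0..s, g r * (1 + ‖φ r‖) := by
    have := hφ.norm_le_add_integral_of_norm_le hgu (fun r _ =>
      (norm_le_mul_one_add_norm_skeletonControl (hinv _) (hbK _) (hσK _) _).trans_eq
        (mul_right_comm _ _ _)) hs
    linarith
  have hG : ∫ s in 0..t, g s ≤ N / 2 :=
    calc ∫ s in 0..t, g s ≤ ∫ s in 0..T, g s :=
          intervalIntegral.integral_mono_interval le_rfl ht.1 ht.2
            ((ae_restrict_iff' measurableSet_Ioc).2 (ae_of_all _ fun _ _ => by positivity))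
            (hg.intervalIntegrable_of_mem_Icc ⟨le_rfl, hT⟩ ⟨hT, le_rfl⟩)
      _ ≤ K * (action T b σ φ φ' + 3 / 2 * T) := by
          rw [intervalIntegral.integral_const_mul]
          gcongr
          exact integral_one_add_norm_le hT hψ
      _ ≤ N / 2 := by
          have := Nat.le_ceil (2 * K * (A + 3 / 2 * T))
          nlinarith [show 0 ≤ K by positivity]
  have := le_two_pow_mul_of_le_add_integral hg hgu (fun s _ => by positivity)
    (fun s _ => by positivity) hu N t ht hG
  linarith

theorem exists_action_add_smul_le [CompleteSpace E] (hb : LipschitzWith L b)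
    (hσ : LipschitzWith L σ) (hinv : ∀ z, IsUnit (σ z)) (hT : 0 ≤ T) (M : ℝ) :
    ∃ C, 0 ≤ C ∧ ∀ (x₀ c : E) (φ φ' : ℝ → E), IsH1Path T x₀ φ φ' → ‖c‖ ≤ 1 →
      (∀ t ∈ Icc 0 T, ‖Ring.inverse (σ (φ t + t • c))‖ ≤ M) →
      action T b σ (fun t => φ t + t • c) (fun t => φ' t + c) ≤
        (1 + C * ‖c‖) * action T b σ φ φ' + C * ‖c‖ := by
  set C₁ := 1 + 4 * (M * L * T) ^ 2
  set C₂ := 4 * (M * (L * T + 1)) ^ 2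
  have hC₁ : 0 ≤ C₁ := by positivity
  have hC₂ : 0 ≤ C₂ * T := mul_nonneg (by positivity) hT
  refine ⟨C₁ + C₂ * T, by positivity, fun x₀ c φ φ' hφ hc hM => ?_⟩
  have hψ2 := (hφ.memLp_skeletonControl hb.continuous hσ.continuous hinv
    ).intervalIntegrable_norm_sq hT
  have hA := action_nonneg hT b σ φ φ'
  calc action T b σ (fun t => φ t + t • c) (fun t => φ' t + c)
      ≤ 1 / 2 * ∫ t in 0..T,
          ((1 + ‖c‖ * C₁) * ‖skeletonControl b σ (φ t) (φ' t)‖ ^ 2 + ‖c‖ * C₂) := by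
        refine mul_le_mul_of_nonneg_left (intervalIntegral.integral_mono_on hT
          (((hφ.add_smul c).memLp_skeletonControl hb.continuous hσ.continuous hinv
            ).intervalIntegrable_norm_sq hT)
          ((hψ2.const_mul _).add intervalIntegrable_const) fun t ht => ?_) (by norm_num)
        exact sq_norm_skeletonControl_add_smul_le hb hσ hinv ht hc (hM t ht)
    _ = (1 + ‖c‖ * C₁) * action T b σ φ φ' + ‖c‖ * C₂ * T / 2 := by
        rw [intervalIntegral.integral_add (hψ2.const_mul _) intervalIntegrable_const,
          intervalIntegral.integral_const_mul, intervalIntegral.integral_const, smul_eq_mul,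
          action]
        ring
    _ ≤ (1 + (C₁ + C₂ * T) * ‖c‖) * action T b σ φ φ' + (C₁ + C₂ * T) * ‖c‖ := by
        nlinarith [mul_nonneg (mul_nonneg (norm_nonneg c) hC₂) hA,
          mul_nonneg (norm_nonneg c) hC₁, mul_nonneg (norm_nonneg c) hC₂]

end Paths

section RateFunction

open Filter Topology Metric

variable {d : ℕ} {T : ℝ} {x₀ : EuclideanSpace ℝ (Fin d)} {L : NNReal}
  {b : EuclideanSpace ℝ (Fin d) → EuclideanSpace ℝ (Fin d)}
  {σ : EuclideanSpace ℝ (Fin d) → (EuclideanSpace ℝ (Fin d) →L[ℝ] EuclideanSpace ℝ (Fin d))}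

theorem mem_rateValues {x : EuclideanSpace ℝ (Fin d)} {r : ℝ} :
    r ∈ rateValues d T x₀ b σ x ↔
      ∃ φ φ', IsH1Path T x₀ φ φ' ∧ φ T = x ∧ r = action T b σ φ φ' := by
  constructor
  · rintro ⟨φ, φ', h₁, h₂, h₃, hx, rfl⟩
    exact ⟨φ, φ', ⟨h₁, h₂, h₃⟩, hx, rfl⟩
  · rintro ⟨φ, φ', ⟨h₁, h₂, h₃⟩, hx, rfl⟩
    exact ⟨φ, φ', h₁, h₂, h₃, hx, rfl⟩

theorem rateValues_nonempty (hT : T ≠ 0) (x : EuclideanSpace ℝ (Fin d)) :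
    (rateValues d T x₀ b σ x).Nonempty := by
  have hconst : IsH1Path T x₀ (fun _ => x₀) (fun _ => 0) :=
    IsH1Path.of_memLp MemLp.zero fun _ _ => by simp
  refine ⟨_, mem_rateValues.2 ⟨_, _, hconst.add_smul (T⁻¹ • (x - x₀)), ?_, rfl⟩⟩
  simp [smul_smul, hT]

theorem nonneg_of_mem_rateValues (hT : 0 ≤ T) {x : EuclideanSpace ℝ (Fin d)} {r : ℝ}
    (hr : r ∈ rateValues d T x₀ b σ x) : 0 ≤ r := by
  obtain ⟨φ, φ', -, -, rfl⟩ := mem_rateValues.1 hr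
  exact action_nonneg hT b σ φ φ'

theorem rateValues_bddBelow (hT : 0 ≤ T) (x : EuclideanSpace ℝ (Fin d)) :
    BddBelow (rateValues d T x₀ b σ x) :=
  ⟨0, fun _ => nonneg_of_mem_rateValues hT⟩

theorem exists_sInf_rateValues_le (hT : 0 < T) (hb : LipschitzWith L b)
    (hσ : LipschitzWith L σ) (hinv : ∀ z, IsUnit (σ z)) (A : ℝ) :
    ∃ C, 0 ≤ C ∧ ∀ x y r, r ∈ rateValues d T x₀ b σ y → r ≤ A → dist x y ≤ T →
      sInf (rateValues d T x₀ b σ x) ≤ (1 + C * dist x y) * r + C * dist x y := by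
  obtain ⟨R, hR⟩ := exists_norm_le_of_action_le hb hσ hinv T x₀ A
  obtain ⟨M, hM⟩ := (isCompact_closedBall (0 : EuclideanSpace ℝ (Fin d)) (R + T)
    ).exists_bound_of_continuousOn (hσ.continuous.ring_inverse_of_isUnit hinv).continuousOn
  obtain ⟨C, hC, hpert⟩ := exists_action_add_smul_le hb hσ hinv hT.le M
  refine ⟨C / T, by positivity, fun x y r hr hrA hxy => ?_⟩
  obtain ⟨φ, φ', hφ, hφT, rfl⟩ := mem_rateValues.1 hr
  set c := T⁻¹ • (x - y)
  have hc : ‖c‖ = dist x y / T := by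
    rw [norm_smul, norm_inv, Real.norm_of_nonneg hT.le, dist_eq_norm, inv_mul_eq_div]
  have hc1 : ‖c‖ ≤ 1 := hc ▸ div_le_one_of_le₀ hxy hT.le
  have hMc : ∀ t ∈ Icc 0 T, ‖Ring.inverse (σ (φ t + t • c))‖ ≤ M := fun t ht => by
    refine hM _ (mem_closedBall_zero_iff.2 ((norm_add_le _ _).trans ?_))
    rw [norm_smul, Real.norm_of_nonneg ht.1]
    nlinarith [hR φ φ' hφ hrA t ht, ht.2, norm_nonneg c, ht.1]
  have hmem : action T b σ (fun t => φ t + t • c) (fun t => φ' t + c) ∈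
      rateValues d T x₀ b σ x :=
    mem_rateValues.2 ⟨_, _, hφ.add_smul c, by simp [c, hφT, smul_smul, hT.ne'], rfl⟩
  calc sInf (rateValues d T x₀ b σ x)
      ≤ action T b σ (fun t => φ t + t • c) (fun t => φ' t + c) :=
        csInf_le (rateValues_bddBelow hT.le x) hmem
    _ ≤ (1 + C * ‖c‖) * action T b σ φ φ' + C * ‖c‖ := hpert x₀ c φ φ' hφ hc1 hMc
    _ = (1 + C / T * dist x y) * action T b σ φ φ' + C / T * dist x y := by
        rw [hc]; ring

theorem isClosed_setOf_sInf_rateValues_le (hT : 0 < T) (hb : LipschitzWith L b)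
    (hσ : LipschitzWith L σ) (hinv : ∀ z, IsUnit (σ z)) (a : ℝ) :
    IsClosed {x | sInf (rateValues d T x₀ b σ x) ≤ a} := by
  obtain ⟨C, hC, hI⟩ := exists_sInf_rateValues_le (x₀ := x₀) hT hb hσ hinv (a + 1)
  refine isClosed_of_closure_subset fun x hx => ?_
  have hlim : Tendsto (fun ε => (1 + C * ε) * (a + ε) + C * ε) (𝓝[>] 0) (𝓝 a) := by
    have : Continuous fun ε : ℝ => (1 + C * ε) * (a + ε) + C * ε := by fun_prop
    simpa using (this.tendsto 0).mono_left nhdsWithin_le_nhds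
  refine ge_of_tendsto hlim ?_
  filter_upwards [Ioo_mem_nhdsGT (lt_min one_pos hT)] with ε ⟨hε, hε1⟩
  obtain ⟨y, hy, hxy⟩ := Metric.mem_closure_iff.1 hx ε hε
  obtain ⟨r, hr, hra⟩ := exists_lt_of_csInf_lt (rateValues_nonempty hT.ne' y)
    (lt_of_le_of_lt hy (lt_add_of_pos_right a hε))
  have hr0 : 0 ≤ r := nonneg_of_mem_rateValues hT.le hr
  calc sInf (rateValues d T x₀ b σ x)
      ≤ (1 + C * dist x y) * r + C * dist x y :=
        hI x y r hr (by linarith [min_le_left 1 T]) (by linarith [min_le_right 1 T])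
    _ ≤ (1 + C * ε) * (a + ε) + C * ε := by gcongr

theorem isBounded_setOf_sInf_rateValues_le (hT : 0 < T) (hb : LipschitzWith L b)
    (hσ : LipschitzWith L σ) (hinv : ∀ z, IsUnit (σ z)) (a : ℝ) :
    Bornology.IsBounded {x | sInf (rateValues d T x₀ b σ x) ≤ a} := by
  obtain ⟨R, hR⟩ := exists_norm_le_of_action_le hb hσ hinv T x₀ (a + 1)
  refine (isBounded_closedBall (x := 0) (r := R)).subset fun x hx => ?_
  obtain ⟨r, hr, hra⟩ := exists_lt_of_csInf_lt (rateValues_nonempty hT.ne' x)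
    (lt_of_le_of_lt hx (lt_add_one a))
  obtain ⟨φ, φ', hφ, rfl, rfl⟩ := mem_rateValues.1 hr
  exact mem_closedBall_zero_iff.2 (hR φ φ' hφ hra.le T ⟨hT.le, le_rfl⟩)

end RateFunction

theorem rate_function_sublevel_compact_general
    (d : ℕ) (T : ℝ) (hT : 0 < T)
    (x₀ : EuclideanSpace ℝ (Fin d)) (L : NNReal)
    (b : EuclideanSpace ℝ (Fin d) → EuclideanSpace ℝ (Fin d))
    (σ : EuclideanSpace ℝ (Fin d) →
      (EuclideanSpace ℝ (Fin d) →L[ℝ] EuclideanSpace ℝ (Fin d)))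
    (hb : LipschitzWith L b) (hσ : LipschitzWith L σ)
    (hinv : ∀ x, IsUnit (σ x)) :
    ∀ a : ℝ, 0 ≤ a →
      IsCompact {x : EuclideanSpace ℝ (Fin d) | sInf (rateValues d T x₀ b σ x) ≤ a} :=
  fun a _ => Metric.isCompact_of_isClosed_isBounded
    (isClosed_setOf_sInf_rateValues_le hT hb hσ hinv a)
    (isBounded_setOf_sInf_rateValues_le hT hb hσ hinv a)

/-- Under the global Lipschitz and invertibility assumptions, every sublevel
set `{x ∈ ℝ^d : I(x) ≤ a}`, `a ∈ [0,∞)`, of the rate function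
`I(x) = inf{A(φ) : φ ∈ H¹_{x₀}, φ(T) = x}` is compact. -/
theorem rate_function_sublevel_compact
    (d : ℕ) (hd : 1 ≤ d) (T : ℝ) (hT : 0 < T)
    (x₀ : EuclideanSpace ℝ (Fin d)) (L : NNReal) (hL : 0 < L)
    (b : EuclideanSpace ℝ (Fin d) → EuclideanSpace ℝ (Fin d))
    (σ : EuclideanSpace ℝ (Fin d) →
      (EuclideanSpace ℝ (Fin d) →L[ℝ] EuclideanSpace ℝ (Fin d)))
    (hb : LipschitzWith L b) (hσ : LipschitzWith L σ)
    (hbound : ‖b 0‖ + ‖σ 0‖ ≤ (L : ℝ))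
    (hinv : ∀ x, IsUnit (σ x)) :
    ∀ a : ℝ, 0 ≤ a →
      IsCompact {x : EuclideanSpace ℝ (Fin d) | sInf (rateValues d T x₀ b σ x) ≤ a} :=
  rate_function_sublevel_compact_general d T hT x₀ L b σ hb hσ hinv
end

section
/- Let b : ℝ^d → ℝ^d and σ : ℝ^d → ℝ^{d×d} be globally Lipschitz with constant L and satisfy |b(0)| + |σ(0)| ≤ L, and suppose σ(x) is invertible for every x ∈ ℝ^d. Fix θ ∈ [0,1]. With A(φ) = (1/2)∫₀^T |σ(φ(t))^{-1}(φ'(t) − b(φ(t)))|² dt and B_h(φ) = (1/2)∫₀^T |σ(φ(t̂))^{-1}(φ'(t) − b((1−θ)φ(t̂) + θφ(ť)))|² dt, for every R > 0 there exists a constant K₁(R) > 0 such that for all h = T/N with h ∈ (0,1], sup{ |A(φ) − B_h(φ)| : φ ∈ H¹_{x₀}(0,T;ℝ^d), ‖φ‖_{H¹} ≤ R } ≤ K₁(R) h^{1/2}. -/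
/-!
Every path of `B_R` is `½`-Hölder: by Cauchy–Schwarz `|φ(t) - φ(s)| ≤ R |t - s|^{1/2}`. So `B_R`
stays in the compact ball of radius `|x₀| + R √T`, on which `σ⁻¹` is bounded (inversion is
continuous) and Lipschitz (`a⁻¹ - c⁻¹ = a⁻¹ (c - a) c⁻¹`), and `b` is bounded. Passing from `A` to
`B_h` moves the arguments of `σ⁻¹` and `b` by at most `R h^{1/2}`, because `t̂` and `ť` are within
`h` of `t` and balls are convex. The integrands therefore differ by `O(h^{1/2} (1 + |φ'|)²)`, whose
integral is bounded in terms of `R` and `T` only.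
-/

open MeasureTheory Set

/-- Largest grid point `t_n = n h` below `t`. -/
noncomputable def gridHat (h t : ℝ) : ℝ := h * ⌊t / h⌋

/-- Smallest grid point `t_n = n h` above `t`. -/
noncomputable def gridCheck (h t : ℝ) : ℝ := h * ⌈t / h⌉

open Metric

section Grid

variable {h t : ℝ}

theorem gridHat_le (hh : 0 < h) (t : ℝ) : gridHat h t ≤ t := by
  have := mul_le_mul_of_nonneg_left (Int.floor_le (t / h)) hh.le
  rwa [mul_div_cancel₀ t hh.ne'] at this

theorem le_gridCheck (hh : 0 < h) (t : ℝ) : t ≤ gridCheck h t := by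
  have := mul_le_mul_of_nonneg_left (Int.le_ceil (t / h)) hh.le
  rwa [mul_div_cancel₀ t hh.ne'] at this

theorem dist_gridHat_le (hh : 0 < h) (t : ℝ) : dist (gridHat h t) t ≤ h := by
  have := mul_lt_mul_of_pos_left (Int.lt_floor_add_one (t / h)) hh
  rw [mul_div_cancel₀ t hh.ne'] at this
  rw [Real.dist_eq, abs_sub_comm, abs_of_nonneg (sub_nonneg.2 (gridHat_le hh t)), gridHat]
  linarith

theorem dist_gridCheck_le (hh : 0 < h) (t : ℝ) : dist (gridCheck h t) t ≤ h := by
  have := mul_lt_mul_of_pos_left (Int.ceil_lt_add_one (t / h)) hh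
  rw [mul_add, mul_div_cancel₀ t hh.ne', mul_one] at this
  rw [Real.dist_eq, abs_of_nonneg (sub_nonneg.2 (le_gridCheck hh t)), gridCheck]
  linarith

theorem measurable_gridHat : Measurable (gridHat h) := by
  unfold gridHat; fun_prop

theorem measurable_gridCheck : Measurable (gridCheck h) := by
  unfold gridCheck; fun_prop

variable {T : ℝ} {N : ℕ}

theorem gridHat_mem_Icc (hT : 0 < T) (hN : 0 < N) (ht : t ∈ Icc 0 T) :
    gridHat (T / N) t ∈ Icc 0 T := by
  have hh : 0 < T / N := div_pos hT (Nat.cast_pos.2 hN)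
  refine ⟨mul_nonneg hh.le ?_, (gridHat_le hh t).trans ht.2⟩
  exact_mod_cast Int.floor_nonneg.2 (div_nonneg ht.1 hh.le)

theorem gridCheck_mem_Icc (hT : 0 < T) (hN : 0 < N) (ht : t ∈ Icc 0 T) :
    gridCheck (T / N) t ∈ Icc 0 T := by
  have hh : 0 < T / N := div_pos hT (Nat.cast_pos.2 hN)
  refine ⟨ht.1.trans (le_gridCheck hh t), ?_⟩
  have hceil : ⌈t / (T / N)⌉ ≤ (N : ℤ) := by
    rw [Int.ceil_le, div_le_iff₀ hh, Int.cast_natCast, mul_div_cancel₀ T (by positivity)]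
    exact ht.2
  calc gridCheck (T / N) t ≤ T / N * N := by unfold gridCheck; gcongr; exact_mod_cast hceil
    _ = T := div_mul_cancel₀ T (by positivity)

end Grid

/-- Composing with `g` needs `f` measurable on all of `S`, not only almost everywhere: `g` may map
a set of positive measure into a null set, as `gridHat` does. -/
theorem ContinuousOn.aestronglyMeasurable_comp {α X E : Type*} [MeasurableSpace α]
    {μ : Measure α} [TopologicalSpace X] [MeasurableSpace X] [OpensMeasurableSpace X]
    [NormedAddCommGroup E] [MeasurableSpace E] [BorelSpace E] [SecondCountableTopology E]
    {f : X → E} {S : Set X} (hf : ContinuousOn f S) (hS : MeasurableSet S)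
    {g : α → X} (hg : Measurable g) {s : Set α} (hs : MeasurableSet s) (hgs : MapsTo g s S) :
    AEStronglyMeasurable (fun a => f (g a)) (μ.restrict s) := by
  classical
  have hmeas : Measurable (S.piecewise f 0) :=
    hf.measurable_piecewise continuousOn_const hS
  refine (hmeas.comp hg).aestronglyMeasurable.congr ?_
  filter_upwards [ae_restrict_mem hs] with a ha
  exact piecewise_eq_of_mem _ _ _ (hgs ha)

theorem integral_norm_le_sqrt_mul_sqrt {α E : Type*} [MeasurableSpace α] {μ : Measure α}
    [IsFiniteMeasure μ] [NormedAddCommGroup E] {f : α → E} (hf : MemLp f 2 μ) :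
    ∫ x, ‖f x‖ ∂μ ≤ √(∫ x, ‖f x‖ ^ 2 ∂μ) * √(μ.real univ) := by
  have h := integral_mul_le_Lp_mul_Lq_of_nonneg (μ := μ) Real.HolderConjugate.two_two
    (f := fun x => ‖f x‖) (g := fun _ => (1 : ℝ)) (.of_forall fun x => norm_nonneg _)
    (.of_forall fun _ => zero_le_one) (by simpa using hf.norm) (by simpa using memLp_const 1)
  simpa [Real.sqrt_eq_rpow, Real.rpow_two] using h

theorem abs_integral_sub_integral_le {α : Type*} [MeasurableSpace α] {μ : Measure α}
    {f g G : α → ℝ} (hf : Integrable f μ) (hg : AEStronglyMeasurable g μ) (hG : Integrable G μ)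
    (hfg : ∀ᵐ x ∂μ, |f x - g x| ≤ G x) :
    |∫ x, f x ∂μ - ∫ x, g x ∂μ| ≤ ∫ x, G x ∂μ := by
  have hfg_int : Integrable (fun x => f x - g x) μ := hG.mono' (hf.aestronglyMeasurable.sub hg) hfg
  have hg_int : Integrable g μ :=
    (hf.sub hfg_int).congr (.of_forall fun x => sub_sub_cancel (f x) (g x))
  rw [← integral_sub hf hg_int]
  exact norm_integral_le_of_norm_le (f := fun x => f x - g x) hG hfg

theorem LipschitzWith.norm_le_add_mul {E F : Type*} [SeminormedAddCommGroup E]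
    [SeminormedAddCommGroup F] {K : NNReal} {f : E → F} (hf : LipschitzWith K f) {M : ℝ} {x : E}
    (hx : ‖x‖ ≤ M) : ‖f x‖ ≤ ‖f 0‖ + K * M := by
  have := hf.dist_le_mul x 0
  rw [dist_eq_norm, dist_zero_right] at this
  linarith [norm_le_insert' (f x) (f 0), mul_le_mul_of_nonneg_left hx K.coe_nonneg]

theorem ContinuousOn.ring_inverse {X R : Type*} [TopologicalSpace X] [NormedRing R]
    [HasSummableGeomSeries R] {f : X → R} {s : Set X} (hf : ContinuousOn f s)
    (hu : ∀ x ∈ s, IsUnit (f x)) : ContinuousOn (fun x => Ring.inverse (f x)) s := fun x hx => by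
  obtain ⟨u, hu⟩ := hu x hx
  exact (hu ▸ NormedRing.inverse_continuousAt u).comp_continuousWithinAt (hf x hx)

theorem IsCompact.exists_norm_ring_inverse_le {X R : Type*} [TopologicalSpace X] [NormedRing R]
    [HasSummableGeomSeries R] {f : X → R} {K : Set X} (hK : IsCompact K)
    (hf : ContinuousOn f K) (hu : ∀ x ∈ K, IsUnit (f x)) :
    ∃ C, 0 < C ∧ ∀ x ∈ K, ‖Ring.inverse (f x)‖ ≤ C := by
  obtain ⟨C, hC⟩ := hK.exists_bound_of_continuousOn (hf.ring_inverse hu)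
  exact ⟨max C 1, by positivity, fun x hx => (hC x hx).trans (le_max_left _ _)⟩

theorem norm_ring_inverse_sub_le {R : Type*} [NormedRing R] {a b : R} (h : IsUnit a ↔ IsUnit b) :
    ‖Ring.inverse a - Ring.inverse b‖ ≤ ‖Ring.inverse a‖ * ‖b - a‖ * ‖Ring.inverse b‖ := by
  rw [Ring.inverse_sub_inverse h]
  exact norm_mul₃_le

theorem abs_sq_norm_apply_sub_sq_norm_apply_le {𝕜 E F : Type*} [NontriviallyNormedField 𝕜]
    [SeminormedAddCommGroup E] [SeminormedAddCommGroup F] [NormedSpace 𝕜 E] [NormedSpace 𝕜 F]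
    (A B : E →L[𝕜] F) {u v : E} {C K : ℝ} (hA : ‖A‖ ≤ C) (hB : ‖B‖ ≤ C) (hu : ‖u‖ ≤ K)
    (hv : ‖v‖ ≤ K) :
    |‖A u‖ ^ 2 - ‖B v‖ ^ 2| ≤ 2 * C * K * (‖A - B‖ * K + C * ‖u - v‖) := by
  have hC : 0 ≤ C := (norm_nonneg _).trans hA
  have hK : 0 ≤ K := (norm_nonneg _).trans hu
  have hdiff : ‖A u - B v‖ ≤ ‖A - B‖ * K + C * ‖u - v‖ := calc
    ‖A u - B v‖ = ‖(A - B) u + B (u - v)‖ := by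
        rw [sub_apply, map_sub, sub_add_sub_cancel]
    _ ≤ ‖A - B‖ * K + C * ‖u - v‖ :=
        (norm_add_le _ _).trans (add_le_add ((A - B).le_opNorm_of_le hu) (B.le_of_opNorm_le hB _))
  calc |‖A u‖ ^ 2 - ‖B v‖ ^ 2| = (‖A u‖ + ‖B v‖) * |‖A u‖ - ‖B v‖| := by
        rw [sq_sub_sq, abs_mul, abs_of_nonneg (by positivity)]
    _ ≤ (C * K + C * K) * ‖A u - B v‖ := by
        gcongr
        · exact A.le_of_opNorm_le_of_le hA hu
        · exact B.le_of_opNorm_le_of_le hB hv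
        · exact abs_norm_sub_norm_le _ _
    _ ≤ 2 * C * K * (‖A - B‖ * K + C * ‖u - v‖) := by
        rw [← two_mul, ← mul_assoc]
        gcongr

section H1Ball

variable {E : Type*} [NormedAddCommGroup E] [NormedSpace ℝ E] {x₀ : E} {T R : ℝ} {φ φ' : ℝ → E}

/-- `φ`, with derivative `φ'`, lies in the ball `B_R` of `H¹_{x₀}(0,T)`. -/
structure MemH1Ball (x₀ : E) (T R : ℝ) (φ φ' : ℝ → E) : Prop where
  integrableOn : IntegrableOn φ' (Icc 0 T)
  integrableOn_sq : IntegrableOn (fun t => ‖φ' t‖ ^ 2) (Icc 0 T)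
  eq_primitive : ∀ t ∈ Icc (0 : ℝ) T, φ t = x₀ + ∫ s in (0 : ℝ)..t, φ' s
  sqrt_integral_sq_le : √(∫ t in (0 : ℝ)..T, ‖φ' t‖ ^ 2) ≤ R

namespace MemH1Ball

theorem dist_le_mul_sqrt (hφ : MemH1Ball x₀ T R φ φ') {s t δ : ℝ} (hs : s ∈ Icc 0 T)
    (ht : t ∈ Icc 0 T) (hδ : dist s t ≤ δ) : dist (φ s) (φ t) ≤ R * √δ := by
  wlog hst : s ≤ t generalizing s t
  · rw [dist_comm] at hδ ⊢
    exact this ht hs hδ (le_of_not_ge hst)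
  have hsub : Ioc s t ⊆ Icc 0 T := Ioc_subset_Icc_self.trans (Icc_subset_Icc hs.1 ht.2)
  have hincr : φ t - φ s = ∫ u in s..t, φ' u := by
    have hint : ∀ u ∈ Icc 0 T, IntervalIntegrable φ' volume 0 u := fun u hu =>
      (hφ.integrableOn.mono_set (uIcc_of_le hu.1 ▸ Icc_subset_Icc le_rfl hu.2)).intervalIntegrable
    rw [hφ.eq_primitive t ht, hφ.eq_primitive s hs, add_sub_add_left_eq_sub,
      intervalIntegral.integral_interval_sub_left (hint t ht) (hint s hs)]
  have hL2 : MemLp φ' 2 (volume.restrict (Ioc s t)) :=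
    (memLp_two_iff_integrable_sq_norm (hφ.integrableOn.mono_set hsub).aestronglyMeasurable).2
      (hφ.integrableOn_sq.mono_set hsub)
  have hsqR : √(∫ u in Ioc s t, ‖φ' u‖ ^ 2) ≤ R := by
    refine le_trans (Real.sqrt_le_sqrt (setIntegral_mono_set
      (hφ.integrableOn_sq.mono_set Ioc_subset_Icc_self) (.of_forall fun _ => sq_nonneg _)
      (Ioc_subset_Ioc hs.1 ht.2).eventuallyLE)) ?_
    rw [← intervalIntegral.integral_of_le (hs.1.trans (hst.trans ht.2))]
    exact hφ.sqrt_integral_sq_le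
  have hts : t - s ≤ δ := by
    rw [Real.dist_eq, abs_sub_comm] at hδ
    exact (le_abs_self _).trans hδ
  calc dist (φ s) (φ t) = ‖∫ u in Ioc s t, φ' u‖ := by
        rw [dist_comm, dist_eq_norm, hincr, intervalIntegral.integral_of_le hst]
    _ ≤ ∫ u in Ioc s t, ‖φ' u‖ := norm_integral_le_integral_norm _
    _ ≤ √(∫ u in Ioc s t, ‖φ' u‖ ^ 2) * √(volume.real (Ioc s t)) := by
        simpa using integral_norm_le_sqrt_mul_sqrt hL2
    _ ≤ R * √δ := by
        rw [Real.volume_real_Ioc_of_le hst]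
        gcongr
        exact (Real.sqrt_nonneg _).trans hφ.sqrt_integral_sq_le

theorem norm_le (hφ : MemH1Ball x₀ T R φ φ') {t : ℝ} (ht : t ∈ Icc 0 T) :
    ‖φ t‖ ≤ ‖x₀‖ + R * √T := by
  have h0 : (0 : ℝ) ∈ Icc 0 T := ⟨le_rfl, ht.1.trans ht.2⟩
  have hφ0 : φ 0 = x₀ := by rw [hφ.eq_primitive 0 h0, intervalIntegral.integral_same, add_zero]
  have := hφ.dist_le_mul_sqrt (δ := T) h0 ht
    (by simpa [Real.dist_eq, abs_of_nonneg ht.1] using ht.2)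
  rw [hφ0, dist_comm, dist_eq_norm] at this
  linarith [norm_le_insert' (φ t) x₀]

theorem continuousOn (hφ : MemH1Ball x₀ T R φ φ') : ContinuousOn φ (Icc 0 T) := by
  refine ((continuousOn_const (c := x₀)).add
    (intervalIntegral.continuousOn_primitive hφ.integrableOn)).congr fun t ht => ?_
  rw [hφ.eq_primitive t ht, intervalIntegral.integral_of_le ht.1, Pi.add_apply]

theorem integrableOn_sq_norm_add (hφ : MemH1Ball x₀ T R φ φ') (β : ℝ) :
    IntegrableOn (fun t => (‖φ' t‖ + β) ^ 2) (Icc 0 T) :=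
  (((memLp_two_iff_integrable_sq_norm hφ.integrableOn.aestronglyMeasurable).2
    hφ.integrableOn_sq).norm.add (memLp_const β)).integrable_sq

theorem setIntegral_sq_norm_add_le (hφ : MemH1Ball x₀ T R φ φ') (hT : 0 ≤ T) (β : ℝ) :
    ∫ t in Ioc 0 T, (‖φ' t‖ + β) ^ 2 ≤ 2 * (R ^ 2 + β ^ 2 * T) := by
  have hsq := hφ.integrableOn_sq.mono_set Ioc_subset_Icc_self
  have hR2 : ∫ t in Ioc 0 T, ‖φ' t‖ ^ 2 ≤ R ^ 2 := by
    rw [← intervalIntegral.integral_of_le hT]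
    exact (Real.sqrt_le_iff.1 hφ.sqrt_integral_sq_le).2
  calc ∫ t in Ioc 0 T, (‖φ' t‖ + β) ^ 2 ≤ ∫ t in Ioc 0 T, 2 * (‖φ' t‖ ^ 2 + β ^ 2) :=
        integral_mono_of_nonneg (.of_forall fun _ => sq_nonneg _)
          ((hsq.add (integrableOn_const measure_Ioc_lt_top.ne)).const_mul 2)
          (.of_forall fun _ => add_sq_le)
    _ = 2 * ((∫ t in Ioc 0 T, ‖φ' t‖ ^ 2) + β ^ 2 * T) := by
        rw [integral_const_mul, integral_add hsq (integrableOn_const measure_Ioc_lt_top.ne),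
          setIntegral_const, Real.volume_real_Ioc_of_le hT, sub_zero, smul_eq_mul, mul_comm T]
    _ ≤ 2 * (R ^ 2 + β ^ 2 * T) := by gcongr

end MemH1Ball

end H1Ball

section ActionIntegrand

variable {E : Type*} [NormedAddCommGroup E] [NormedSpace ℝ E]
  {σ : E → E →L[ℝ] E} {b : E → E} {s : Set E} {C β : ℝ}

noncomputable def actionIntegrand (σ : E → E →L[ℝ] E) (b : E → E) (x y p : E) : ℝ :=
  ‖Ring.inverse (σ x) (p - b y)‖ ^ 2

theorem actionIntegrand_nonneg (x y p : E) : 0 ≤ actionIntegrand σ b x y p := sq_nonneg _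

theorem continuous_actionIntegrand [CompleteSpace E] (hσ : Continuous σ)
    (hinv : ∀ x, IsUnit (σ x)) (hb : Continuous b) :
    Continuous fun q : E × E × E => actionIntegrand σ b q.1 q.2.1 q.2.2 := by
  have hσinv := continuousOn_univ.1 (hσ.continuousOn.ring_inverse fun x _ => hinv x)
  exact ((hσinv.comp continuous_fst).clm_apply
    (continuous_snd.snd.sub (hb.comp continuous_snd.fst))).norm.pow 2

theorem actionIntegrand_le (hC : ∀ x ∈ s, ‖Ring.inverse (σ x)‖ ≤ C)
    (hβ : ∀ y ∈ s, ‖b y‖ ≤ β) {x y : E} (hx : x ∈ s) (hy : y ∈ s) (p : E) :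
    actionIntegrand σ b x y p ≤ C ^ 2 * (‖p‖ + β) ^ 2 := by
  have hv : ‖p - b y‖ ≤ ‖p‖ + β := (norm_sub_le _ _).trans (by gcongr; exact hβ y hy)
  rw [actionIntegrand, ← mul_pow]
  exact pow_le_pow_left₀ (norm_nonneg _) ((Ring.inverse (σ x)).le_of_opNorm_le_of_le (hC x hx) hv) 2

theorem abs_actionIntegrand_sub_le {L : NNReal} (hσ : LipschitzWith L σ) (hb : LipschitzWith L b)
    (hinv : ∀ x ∈ s, IsUnit (σ x)) (hC : ∀ x ∈ s, ‖Ring.inverse (σ x)‖ ≤ C)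
    (hβ : ∀ y ∈ s, ‖b y‖ ≤ β) (hβ1 : 1 ≤ β) {x y c : E} {δ : ℝ} (hx : x ∈ s) (hy : y ∈ s)
    (hc : c ∈ s) (hxy : dist y x ≤ δ) (hxc : dist c x ≤ δ) (p : E) :
    |actionIntegrand σ b x x p - actionIntegrand σ b y c p| ≤
      2 * (C + 1) * L * δ * (C ^ 2 * (‖p‖ + β) ^ 2) := by
  have hC0 : 0 ≤ C := (norm_nonneg _).trans (hC x hx)
  have hδ : 0 ≤ δ := dist_nonneg.trans hxy
  -- `1 ≤ β` absorbs the term of first order in `‖p‖ + β` into the quadratic one.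
  have hK : 1 ≤ ‖p‖ + β := le_add_of_nonneg_of_le (norm_nonneg p) hβ1
  have hv : ∀ z ∈ s, ‖p - b z‖ ≤ ‖p‖ + β := fun z hz =>
    (norm_sub_le _ _).trans (by gcongr; exact hβ z hz)
  have hinv_sub : ‖Ring.inverse (σ x) - Ring.inverse (σ y)‖ ≤ C * (L * δ) * C := by
    refine (norm_ring_inverse_sub_le (iff_of_true (hinv x hx) (hinv y hy))).trans ?_
    rw [← dist_eq_norm]
    gcongr
    exacts [hC x hx, (hσ.dist_le_mul y x).trans (by gcongr), hC y hy]
  have hb_sub : ‖(p - b x) - (p - b c)‖ ≤ L * δ := by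
    rw [sub_sub_sub_cancel_left, ← dist_eq_norm]
    exact (hb.dist_le_mul c x).trans (by gcongr)
  calc |actionIntegrand σ b x x p - actionIntegrand σ b y c p|
      ≤ 2 * C * (‖p‖ + β) * (‖Ring.inverse (σ x) - Ring.inverse (σ y)‖ * (‖p‖ + β) +
          C * ‖(p - b x) - (p - b c)‖) :=
        abs_sq_norm_apply_sub_sq_norm_apply_le _ _ (hC x hx) (hC y hy) (hv x hx) (hv c hc)
    _ ≤ 2 * C * (‖p‖ + β) * (C * (L * δ) * C * (‖p‖ + β) + C * (L * δ * (‖p‖ + β))) := by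
        gcongr
        exact hb_sub.trans (le_mul_of_one_le_right (by positivity) hK)
    _ = 2 * (C + 1) * L * δ * (C ^ 2 * (‖p‖ + β) ^ 2) := by ring

end ActionIntegrand

section GridScheme

variable {E : Type*} [NormedAddCommGroup E] [NormedSpace ℝ E] {x₀ : E} {T R : ℝ}
  {φ φ' : ℝ → E} {σ : E → E →L[ℝ] E} {b : E → E} {L : NNReal} {θ C β : ℝ} {N : ℕ}

theorem MemH1Ball.abs_actionIntegrand_grid_sub_le (hφ : MemH1Ball x₀ T R φ φ')
    (hσ : LipschitzWith L σ) (hb : LipschitzWith L b) (hinv : ∀ x, IsUnit (σ x))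
    (hθ0 : 0 ≤ θ) (hθ1 : θ ≤ 1) (hT : 0 < T) (hN : 0 < N)
    (hC : ∀ x ∈ closedBall (0 : E) (‖x₀‖ + R * √T), ‖Ring.inverse (σ x)‖ ≤ C)
    (hβ : ∀ y ∈ closedBall (0 : E) (‖x₀‖ + R * √T), ‖b y‖ ≤ β) (hβ1 : 1 ≤ β)
    {t : ℝ} (ht : t ∈ Icc 0 T) :
    |actionIntegrand σ b (φ t) (φ t) (φ' t) - actionIntegrand σ b (φ (gridHat (T / N) t))
        ((1 - θ) • φ (gridHat (T / N) t) + θ • φ (gridCheck (T / N) t)) (φ' t)| ≤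
      2 * (C + 1) * L * (R * √(T / N)) * (C ^ 2 * (‖φ' t‖ + β) ^ 2) := by
  have hh : 0 < T / N := by positivity
  have hball : ∀ s ∈ Icc 0 T, φ s ∈ closedBall 0 (‖x₀‖ + R * √T) := fun s hs =>
    mem_closedBall_zero_iff.2 (hφ.norm_le hs)
  have hhat := gridHat_mem_Icc hT hN ht
  have hcheck := gridCheck_mem_Icc hT hN ht
  have hhat_near := hφ.dist_le_mul_sqrt hhat ht (dist_gridHat_le hh t)
  have hcheck_near := hφ.dist_le_mul_sqrt hcheck ht (dist_gridCheck_le hh t)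
  exact abs_actionIntegrand_sub_le hσ hb (fun x _ => hinv x) hC hβ hβ1 (hball t ht) (hball _ hhat)
    (convex_closedBall _ _ (hball _ hhat) (hball _ hcheck) (by linarith) hθ0 (by ring))
    hhat_near
    (convex_closedBall (φ t) _ hhat_near hcheck_near (by linarith) hθ0 (by ring)) (φ' t)

theorem MemH1Ball.abs_integral_actionIntegrand_grid_sub_le [CompleteSpace E]
    [MeasurableSpace E] [BorelSpace E] [SecondCountableTopology E]
    (hφ : MemH1Ball x₀ T R φ φ') (hσ : LipschitzWith L σ) (hb : LipschitzWith L b)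
    (hinv : ∀ x, IsUnit (σ x)) (hθ0 : 0 ≤ θ) (hθ1 : θ ≤ 1) (hT : 0 < T) (hN : 0 < N)
    (hC : ∀ x ∈ closedBall (0 : E) (‖x₀‖ + R * √T), ‖Ring.inverse (σ x)‖ ≤ C)
    (hβ : ∀ y ∈ closedBall (0 : E) (‖x₀‖ + R * √T), ‖b y‖ ≤ β) (hβ1 : 1 ≤ β) :
    |(∫ t in Ioc 0 T, actionIntegrand σ b (φ t) (φ t) (φ' t)) -
        ∫ t in Ioc 0 T, actionIntegrand σ b (φ (gridHat (T / N) t))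
          ((1 - θ) • φ (gridHat (T / N) t) + θ • φ (gridCheck (T / N) t)) (φ' t)| ≤
      2 * (C + 1) * L * (R * √(T / N)) * ∫ t in Ioc 0 T, C ^ 2 * (‖φ' t‖ + β) ^ 2 := by
  have hcomp : ∀ g : ℝ → ℝ, Measurable g → MapsTo g (Icc 0 T) (Icc 0 T) →
      AEStronglyMeasurable (fun t => φ (g t)) (volume.restrict (Ioc 0 T)) := fun g hg hgT =>
    hφ.continuousOn.aestronglyMeasurable_comp measurableSet_Icc hg measurableSet_Ioc
      (hgT.mono_left Ioc_subset_Icc_self)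
  have hx := hcomp id measurable_id (mapsTo_id _)
  have hy := hcomp _ measurable_gridHat fun t => gridHat_mem_Icc hT hN
  have hz := hcomp _ measurable_gridCheck fun t => gridCheck_mem_Icc hT hN
  have hφ'm := (hφ.integrableOn.mono_set Ioc_subset_Icc_self).aestronglyMeasurable
  have hF := continuous_actionIntegrand hσ.continuous hinv hb.continuous
  have hfm := hF.comp_aestronglyMeasurable (hx.prodMk (hx.prodMk hφ'm))
  have hgm := hF.comp_aestronglyMeasurable
    (hy.prodMk (((hy.const_smul (1 - θ)).add (hz.const_smul θ)).prodMk hφ'm))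
  have hG := ((hφ.integrableOn_sq_norm_add β).mono_set Ioc_subset_Icc_self).const_mul (C ^ 2)
  have hf : IntegrableOn (fun t => actionIntegrand σ b (φ t) (φ t) (φ' t)) (Ioc 0 T) :=
    hG.mono' hfm (ae_restrict_of_forall_mem measurableSet_Ioc fun t ht => by
      have hφt := mem_closedBall_zero_iff.2 (hφ.norm_le (Ioc_subset_Icc_self ht))
      rw [Real.norm_of_nonneg (actionIntegrand_nonneg _ _ _)]
      exact actionIntegrand_le hC hβ hφt hφt _)
  rw [← integral_const_mul]
  exact abs_integral_sub_integral_le hf hgm (hG.const_mul _)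
    (ae_restrict_of_forall_mem measurableSet_Ioc fun t ht => hφ.abs_actionIntegrand_grid_sub_le
      hσ hb hinv hθ0 hθ1 hT hN hC hβ hβ1 (Ioc_subset_Icc_self ht))

end GridScheme

theorem A_Bh_uniform_error_multiplicative_general
    (d : ℕ) (T : ℝ) (hT : 0 < T)
    (x₀ : EuclideanSpace ℝ (Fin d)) (L : NNReal) (hL : 0 < L)
    (θ : ℝ) (hθ0 : 0 ≤ θ) (hθ1 : θ ≤ 1)
    (b : EuclideanSpace ℝ (Fin d) → EuclideanSpace ℝ (Fin d))
    (σ : EuclideanSpace ℝ (Fin d) →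
      (EuclideanSpace ℝ (Fin d) →L[ℝ] EuclideanSpace ℝ (Fin d)))
    (hb : LipschitzWith L b) (hσ : LipschitzWith L σ)
    (hinv : ∀ x, IsUnit (σ x)) :
    ∀ R : ℝ, 0 < R → ∃ K₁ : ℝ, 0 < K₁ ∧
      ∀ N : ℕ, 0 < N → T / (N : ℝ) ≤ 1 →
      ∀ φ φ' : ℝ → EuclideanSpace ℝ (Fin d),
        IntegrableOn φ' (Icc 0 T) →
        IntegrableOn (fun t => ‖φ' t‖ ^ 2) (Icc 0 T) →
        (∀ t ∈ Icc (0 : ℝ) T, φ t = x₀ + ∫ s in (0 : ℝ)..t, φ' s) →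
        Real.sqrt (∫ t in (0 : ℝ)..T, ‖φ' t‖ ^ 2) ≤ R →
        |((1 / 2) * ∫ t in (0 : ℝ)..T,
            ‖(Ring.inverse (σ (φ t))) (φ' t - b (φ t))‖ ^ 2) -
          ((1 / 2) * ∫ t in (0 : ℝ)..T,
            ‖(Ring.inverse (σ (φ (gridHat (T / (N : ℝ)) t))))
              (φ' t - b ((1 - θ) • φ (gridHat (T / (N : ℝ)) t)
                + θ • φ (gridCheck (T / (N : ℝ)) t)))‖ ^ 2)| ≤
          K₁ * Real.sqrt (T / (N : ℝ)) := by
  intro R hR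
  set M := ‖x₀‖ + R * √T
  obtain ⟨C, hC0, hC⟩ := (isCompact_closedBall (0 : EuclideanSpace ℝ (Fin d)) M)
    |>.exists_norm_ring_inverse_le hσ.continuous.continuousOn fun x _ => hinv x
  set β := 1 + (‖b 0‖ + L * M)
  have hβ : ∀ y ∈ closedBall 0 M, ‖b y‖ ≤ β := fun y hy =>
    (hb.norm_le_add_mul (mem_closedBall_zero_iff.1 hy)).trans (le_add_of_nonneg_left zero_le_one)
  have hβ1 : 1 ≤ β := le_add_of_nonneg_right (by positivity)
  refine ⟨(C + 1) * L * R * (C ^ 2 * (2 * (R ^ 2 + β ^ 2 * T))), by positivity, ?_⟩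
  intro N hN _ φ φ' hφ' hφ'sq hφ hφR
  have hB : MemH1Ball x₀ T R φ φ' := ⟨hφ', hφ'sq, hφ, hφR⟩
  change |(1 / 2 * ∫ t in (0 : ℝ)..T, actionIntegrand σ b (φ t) (φ t) (φ' t)) -
      1 / 2 * ∫ t in (0 : ℝ)..T, actionIntegrand σ b (φ (gridHat (T / N) t))
        ((1 - θ) • φ (gridHat (T / N) t) + θ • φ (gridCheck (T / N) t)) (φ' t)| ≤ _
  rw [intervalIntegral.integral_of_le hT.le, intervalIntegral.integral_of_le hT.le, ← mul_sub,
    abs_mul, abs_of_pos one_half_pos]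
  calc _ ≤ 1 / 2 * (2 * (C + 1) * L * (R * √(T / N)) *
        ∫ t in Ioc 0 T, C ^ 2 * (‖φ' t‖ + β) ^ 2) := by
        gcongr
        exact hB.abs_integral_actionIntegrand_grid_sub_le hσ hb hinv hθ0 hθ1 hT hN hC hβ hβ1
    _ = (C + 1) * L * R * (C ^ 2 * ∫ t in Ioc 0 T, (‖φ' t‖ + β) ^ 2) * √(T / N) := by
        rw [integral_const_mul]; ring
    _ ≤ _ := by
        gcongr
        exact hB.setIntegral_sq_norm_add_le hT.le β

/-- With `A(φ) = ½∫₀ᵀ |σ(φ(t))⁻¹(φ'(t) − b(φ(t)))|² dt` and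
`B_h(φ) = ½∫₀ᵀ |σ(φ(t̂))⁻¹(φ'(t) − b((1−θ)φ(t̂) + θφ(ť)))|² dt`, for every `R > 0` there is
`K₁(R) > 0` such that for every step-size `h = T/N ∈ (0,1]`,
`|A(φ) − B_h(φ)| ≤ K₁(R) h^{1/2}` uniformly over `φ ∈ H¹_{x₀}` with `‖φ‖_{H¹} ≤ R`. -/
theorem A_Bh_uniform_error_multiplicative
    (d : ℕ) (hd : 1 ≤ d) (T : ℝ) (hT : 0 < T)
    (x₀ : EuclideanSpace ℝ (Fin d)) (L : NNReal) (hL : 0 < L)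
    (θ : ℝ) (hθ0 : 0 ≤ θ) (hθ1 : θ ≤ 1)
    (b : EuclideanSpace ℝ (Fin d) → EuclideanSpace ℝ (Fin d))
    (σ : EuclideanSpace ℝ (Fin d) →
      (EuclideanSpace ℝ (Fin d) →L[ℝ] EuclideanSpace ℝ (Fin d)))
    (hb : LipschitzWith L b) (hσ : LipschitzWith L σ)
    (hbound : ‖b 0‖ + ‖σ 0‖ ≤ (L : ℝ))
    (hinv : ∀ x, IsUnit (σ x)) :
    ∀ R : ℝ, 0 < R → ∃ K₁ : ℝ, 0 < K₁ ∧
      ∀ N : ℕ, 0 < N → T / (N : ℝ) ≤ 1 →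
      ∀ φ φ' : ℝ → EuclideanSpace ℝ (Fin d),
        IntegrableOn φ' (Icc 0 T) →
        IntegrableOn (fun t => ‖φ' t‖ ^ 2) (Icc 0 T) →
        (∀ t ∈ Icc (0 : ℝ) T, φ t = x₀ + ∫ s in (0 : ℝ)..t, φ' s) →
        Real.sqrt (∫ t in (0 : ℝ)..T, ‖φ' t‖ ^ 2) ≤ R →
        |((1 / 2) * ∫ t in (0 : ℝ)..T,
            ‖(Ring.inverse (σ (φ t))) (φ' t - b (φ t))‖ ^ 2) -
          ((1 / 2) * ∫ t in (0 : ℝ)..T,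
            ‖(Ring.inverse (σ (φ (gridHat (T / (N : ℝ)) t))))
              (φ' t - b ((1 - θ) • φ (gridHat (T / (N : ℝ)) t)
                + θ • φ (gridCheck (T / (N : ℝ)) t)))‖ ^ 2)| ≤
          K₁ * Real.sqrt (T / (N : ℝ)) :=
  A_Bh_uniform_error_multiplicative_general d T hT x₀ L hL θ hθ0 hθ1 b σ hb hσ hinv
end
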